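/- arXiv:1312.6097 — 4 statements merged into one kernel-verified Lean document; each statement's English description precedes it below -/
import Mathlib

section
/- Let N be a homogeneous Riemannian manifold and β : ℝ → N a unit-speed geodesic with β(0) = β(a) for some a ≠ 0. Then β'(0) = β'(a), i.e., every geodesic loop in a homogeneous Riemannian manifold is a closed geodesic. -/
open scoped RealInnerProductSpace

theorem stmt0_general {N E : Type*} [NormedAddCommGroup E] [InnerProductSpace ℝ E]
    (β : ℝ → N) (β' : ℝ → E)
    (hunit : ∀ t : ℝ, ‖β' t‖ = 1)
    (hKilling : ∀ (p : N) (v : E), ∃ X : N → E,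
      X p = v ∧ ∀ s t : ℝ, ⟪X (β s), β' s⟫ = ⟪X (β t), β' t⟫)
    (a : ℝ) (hloop : β 0 = β a) :
    β' 0 = β' a := by
  obtain ⟨X, hX, hconst⟩ := hKilling (β 0) (β' 0)
  have hinner : ⟪β' 0, β' a⟫ = 1 :=
    calc ⟪β' 0, β' a⟫ = ⟪X (β a), β' a⟫ := by rw [← hloop, hX]
      _ = ⟪X (β 0), β' 0⟫ := (hconst 0 a).symm
      _ = 1 := by rw [hX, real_inner_self_eq_norm_sq, hunit 0, one_pow]
  exact (inner_eq_one_iff_of_norm_eq_one (hunit 0) (hunit a)).mp hinner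

/-- In a homogeneous Riemannian manifold `N`, every geodesic loop is a closed
geodesic: if `β : ℝ → N` is a unit-speed geodesic with `β 0 = β a` for some `a ≠ 0`, then
`β' 0 = β' a`.  The tangent vectors along the curve are represented in a fixed real inner
product space `E` (via a parallel trivialization along `β`), `β'` is the velocity field of
the unit-speed geodesic, and homogeneity enters through the existence, for every point `p`
and vector `v`, of a Killing field `X` on `N` with `X p = v`; a Killing field has constant
inner product with the velocity field of a geodesic. -/
theorem stmt0 {N E : Type*} [NormedAddCommGroup E] [InnerProductSpace ℝ E]
    (β : ℝ → N) (β' : ℝ → E)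
    (hunit : ∀ t : ℝ, ‖β' t‖ = 1)
    (hKilling : ∀ (p : N) (v : E), ∃ X : N → E,
      X p = v ∧ ∀ s t : ℝ, ⟪X (β s), β' s⟫ = ⟪X (β t), β' t⟫)
    (a : ℝ) (ha : a ≠ 0) (hloop : β 0 = β a) :
    β' 0 = β' a :=
  stmt0_general β β' hunit hKilling a hloop
end

section
/- For n ≥ 2, n ≠ 3, the only Ad(SO(n))-invariant complement of so(n) in so(n+1) is the orthogonal complement of so(n) with respect to the Killing form of so(n+1); i.e., the reductive decomposition of the homogeneous sphere SO(n+1)/SO(n) is unique. -/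
/-!
An `ad(𝔥)`-invariant complement `𝔪` of `𝔥 = so(n)` in `so(n+1)` meets `𝔥` trivially, so its
elements are determined by their first columns, and `𝔪` is the graph of an `𝔥`-equivariant map
from the standard complement `𝔪₀ ≅ ℝⁿ` (skew matrices supported on the first row and column) to
`𝔥`. That map vanishes: for `n ≥ 4` by bracketing with rotations in planes avoiding the support,
for `n = 2` because `ad(H)²` is `-1` on `𝔪₀` and `0` on `𝔥 = ℝ H`. So `𝔪 = 𝔪₀`, which is the
trace-orthogonal complement of `𝔥`.
-/

open Matrix

/-- The space `so(m)` of skew-symmetric real `m × m` matrices. -/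
def soMat (m : ℕ) : Submodule ℝ (Matrix (Fin m) (Fin m) ℝ) where
  carrier := {A | Aᵀ = -A}
  add_mem' := by
    intro A B hA hB
    simp only [Set.mem_setOf_eq] at *
    rw [Matrix.transpose_add, hA, hB, neg_add]
  zero_mem' := by simp
  smul_mem' := by
    intro c A hA
    simp only [Set.mem_setOf_eq] at *
    rw [Matrix.transpose_smul, hA, smul_neg]

/-- Evaluation of a matrix on the first standard basis vector, as a linear map. -/
def evalFirst (n : ℕ) : Matrix (Fin (n + 1)) (Fin (n + 1)) ℝ →ₗ[ℝ] (Fin (n + 1) → ℝ) where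
  toFun A := A.mulVec (Pi.single 0 1)
  map_add' A B := by funext i; simp [Matrix.add_mulVec]
  map_smul' c A := by funext i; simp [Matrix.smul_mulVec]

namespace soMat

variable {m : ℕ} {A : Matrix (Fin m) (Fin m) ℝ}

lemma apply_swap (hA : A ∈ soMat m) (i j : Fin m) : A j i = -A i j := by
  simpa using congrFun (congrFun hA i) j

lemma apply_self (hA : A ∈ soMat m) (i : Fin m) : A i i = 0 := by
  linarith [apply_swap hA i i]

end soMat

lemma mem_ker_evalFirst {n : ℕ} {A : Matrix (Fin (n + 1)) (Fin (n + 1)) ℝ} :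
    A ∈ LinearMap.ker (evalFirst n) ↔ ∀ i, A i 0 = 0 := by
  change A *ᵥ Pi.single 0 1 = 0 ↔ _
  simp [mulVec_single, funext_iff]

/-- `so(n) ⊂ so(n + 1)`, realized as the stabilizer of the first basis vector. -/
abbrev soStabilizer (n : ℕ) : Submodule ℝ (Matrix (Fin (n + 1)) (Fin (n + 1)) ℝ) :=
  soMat (n + 1) ⊓ LinearMap.ker (evalFirst n)

section SkewSingle

variable {m : ℕ}

def skewSingle (a b : Fin m) : Matrix (Fin m) (Fin m) ℝ :=
  single a b 1 - single b a 1

lemma skewSingle_mul_apply (a b : Fin m) (M : Matrix (Fin m) (Fin m) ℝ) (i j : Fin m) :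
    (skewSingle a b * M) i j = (if i = a then M b j else 0) - (if i = b then M a j else 0) := by
  rcases eq_or_ne i a with rfl | hia <;> rcases eq_or_ne i b with rfl | hib <;>
    simp [skewSingle, sub_mul, single_mul_apply_same, single_mul_apply_of_ne, *]

lemma mul_skewSingle_apply (a b : Fin m) (M : Matrix (Fin m) (Fin m) ℝ) (i j : Fin m) :
    (M * skewSingle a b) i j = (if j = b then M i a else 0) - (if j = a then M i b else 0) := by
  rcases eq_or_ne j a with rfl | hja <;> rcases eq_or_ne j b with rfl | hjb <;>
    simp [skewSingle, mul_sub, mul_single_apply_same, mul_single_apply_of_ne, *]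

lemma trace_mul_skewSingle (M : Matrix (Fin m) (Fin m) ℝ) (a b : Fin m) :
    (M * skewSingle a b).trace = M b a - M a b := by
  simp [trace, mul_skewSingle_apply, Finset.sum_sub_distrib]

lemma skewSingle_mem {n : ℕ} {a b : Fin (n + 1)} (ha : a ≠ 0) (hb : b ≠ 0) :
    skewSingle a b ∈ soStabilizer n := by
  refine ⟨?_, mem_ker_evalFirst.2 fun i => ?_⟩
  · change _ = _
    rw [skewSingle, transpose_sub, transpose_single, transpose_single, neg_sub]
  · simp [skewSingle, single_apply_of_col_ne _ _ ha, single_apply_of_col_ne _ _ hb]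

end SkewSingle

section SkewOfCol

variable {n : ℕ}

/-- On vectors with `v 0 = 0`, this parametrizes the standard complement `𝔪₀ ≅ ℝⁿ`. -/
def skewOfCol (n : ℕ) : (Fin (n + 1) → ℝ) →ₗ[ℝ] Matrix (Fin (n + 1)) (Fin (n + 1)) ℝ where
  toFun v := of fun i j => (if j = 0 then v i else 0) - (if i = 0 then v j else 0)
  map_add' v w := by
    ext i j; simp only [of_apply, Matrix.add_apply, Pi.add_apply]
    split_ifs <;> ring
  map_smul' c v := by
    ext i j; simp only [of_apply, Matrix.smul_apply, Pi.smul_apply, smul_eq_mul, RingHom.id_apply]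
    split_ifs <;> ring

lemma skewOfCol_apply (v : Fin (n + 1) → ℝ) (i j : Fin (n + 1)) :
    skewOfCol n v i j = (if j = 0 then v i else 0) - (if i = 0 then v j else 0) := rfl

lemma skewOfCol_mem_soMat (v : Fin (n + 1) → ℝ) : skewOfCol n v ∈ soMat (n + 1) := by
  ext i j
  simp only [transpose_apply, Matrix.neg_apply, skewOfCol_apply]
  ring

lemma skewOfCol_apply_zero {v : Fin (n + 1) → ℝ} (hv : v 0 = 0) (i : Fin (n + 1)) :
    skewOfCol n v i 0 = v i := by
  rcases eq_or_ne i 0 with rfl | hi <;> simp [skewOfCol_apply, *]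

lemma skewOfCol_single_zero : skewOfCol n (Pi.single 0 1) = 0 := by
  ext i j
  rcases eq_or_ne i 0 with rfl | hi <;> rcases eq_or_ne j 0 with rfl | hj <;>
    simp [skewOfCol_apply, *]

lemma eq_skewOfCol_of_mem_soMat {A : Matrix (Fin (n + 1)) (Fin (n + 1)) ℝ}
    (hA : A ∈ soMat (n + 1)) (hint : ∀ p q, p ≠ 0 → q ≠ 0 → A p q = 0) :
    A = skewOfCol n (fun i => A i 0) := by
  ext i j
  rcases eq_or_ne i 0 with rfl | hi <;> rcases eq_or_ne j 0 with rfl | hj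
  · simp [skewOfCol_apply, soMat.apply_self hA]
  · simp [skewOfCol_apply, hj, soMat.apply_swap hA 0 j]
  · simp [skewOfCol_apply, hi]
  · simp [skewOfCol_apply, hi, hj, hint i j hi hj]

end SkewOfCol

section TraceForm

variable {n : ℕ} {A : Matrix (Fin (n + 1)) (Fin (n + 1)) ℝ}

lemma trace_mul_eq_zero_of_mem_soStabilizer (hint : ∀ p q, p ≠ 0 → q ≠ 0 → A p q = 0)
    {H : Matrix (Fin (n + 1)) (Fin (n + 1)) ℝ}
    (hH : H ∈ soStabilizer n) : (A * H).trace = 0 := by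
  have hcol := mem_ker_evalFirst.1 hH.2
  refine Finset.sum_eq_zero fun i _ => ?_
  rw [diag_apply, mul_apply]
  refine Finset.sum_eq_zero fun j _ => ?_
  rcases eq_or_ne j 0 with rfl | hj
  · simp [soMat.apply_swap hH.1 i 0, hcol]
  rcases eq_or_ne i 0 with rfl | hi
  · simp [hcol]
  · simp [hint i j hi hj]

lemma trace_orthogonal_iff (hA : A ∈ soMat (n + 1)) :
    (∀ H ∈ soStabilizer n, (A * H).trace = 0) ↔
      ∀ p q, p ≠ 0 → q ≠ 0 → A p q = 0 := by
  refine ⟨fun h p q hp hq => ?_, fun hint _ => trace_mul_eq_zero_of_mem_soStabilizer hint⟩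
  have htr := h _ (skewSingle_mem hp hq)
  rw [trace_mul_skewSingle, soMat.apply_swap hA] at htr
  linarith

end TraceForm

section Complement

variable {n : ℕ} {𝔪 : Submodule ℝ (Matrix (Fin (n + 1)) (Fin (n + 1)) ℝ)}
  {M : Matrix (Fin (n + 1)) (Fin (n + 1)) ℝ}

lemma eq_zero_of_mem_of_col_eq_zero (hsub : 𝔪 ≤ soMat (n + 1)) (hdisj : soStabilizer n ⊓ 𝔪 = ⊥)
    (hM : M ∈ 𝔪) (hcol : ∀ i, M i 0 = 0) : M = 0 := by
  have hmem : M ∈ soStabilizer n ⊓ 𝔪 := ⟨⟨hsub hM, mem_ker_evalFirst.2 hcol⟩, hM⟩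
  simpa [hdisj] using hmem

lemma exists_mem_col_eq (hsum : soStabilizer n ⊔ 𝔪 = soMat (n + 1)) {v : Fin (n + 1) → ℝ}
    (hv : v 0 = 0) : ∃ M ∈ 𝔪, ∀ i, M i 0 = v i := by
  obtain ⟨H, hH, M, hM, hHM⟩ := Submodule.mem_sup.1 (hsum ▸ skewOfCol_mem_soMat v)
  refine ⟨M, hM, fun i => ?_⟩
  rw [← skewOfCol_apply_zero hv i, ← hHM, Matrix.add_apply, mem_ker_evalFirst.1 hH.2 i, zero_add]

/-- `⁅E_ap - E_pa, M⁆ ∈ 𝔪` has zero first column, hence vanishes; its `(a, q)` entry is `M p q`. -/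
lemma apply_eq_zero_of_mem_of_col_eq_zero (hsub : 𝔪 ≤ soMat (n + 1))
    (hdisj : soStabilizer n ⊓ 𝔪 = ⊥) (hinv : ∀ H ∈ soStabilizer n, ∀ X ∈ 𝔪, H * X - X * H ∈ 𝔪)
    (hM : M ∈ 𝔪) {a p q : Fin (n + 1)} (ha : a ≠ 0) (hp : p ≠ 0) (hap : a ≠ p) (haq : a ≠ q)
    (hMa : M a 0 = 0) (hMp : M p 0 = 0) : M p q = 0 := by
  have hcomm := eq_zero_of_mem_of_col_eq_zero hsub hdisj (hinv _ (skewSingle_mem ha hp) M hM)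
    fun i => by simp [skewSingle_mul_apply, mul_skewSingle_apply, hMa, hMp, hp.symm, ha.symm]
  have hentry := congrFun (congrFun hcomm a) q
  simpa [skewSingle_mul_apply, mul_skewSingle_apply, hap, haq.symm,
    soMat.apply_self (hsub hM)] using hentry

lemma apply_eq_zero_of_col_supported (h4 : 4 ≤ n) (hsub : 𝔪 ≤ soMat (n + 1))
    (hdisj : soStabilizer n ⊓ 𝔪 = ⊥) (hinv : ∀ H ∈ soStabilizer n, ∀ X ∈ 𝔪, H * X - X * H ∈ 𝔪)
    (hM : M ∈ 𝔪) {k : Fin (n + 1)} (hcol : ∀ i, i ≠ k → M i 0 = 0)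
    {p q : Fin (n + 1)} (hp : p ≠ 0) (hq : q ≠ 0) : M p q = 0 := by
  have hoff : ∀ p q : Fin (n + 1), p ≠ 0 → p ≠ k → M p q = 0 := by
    intro p q hp hpk
    have hcard :
        ({0, p, q, k} : Finset (Fin (n + 1))).card < (Finset.univ : Finset (Fin (n + 1))).card := by
      rw [Finset.card_univ, Fintype.card_fin]
      exact Finset.card_le_four.trans_lt (by omega)
    obtain ⟨a, -, ha⟩ := Finset.exists_mem_notMem_of_card_lt_card hcard
    simp only [Finset.mem_insert, Finset.mem_singleton, not_or] at ha
    obtain ⟨ha0, hap, haq, hak⟩ := ha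
    exact apply_eq_zero_of_mem_of_col_eq_zero hsub hdisj hinv hM ha0 hp hap haq
      (hcol a hak) (hcol p hpk)
  rcases eq_or_ne p k with rfl | hpk
  · rcases eq_or_ne q p with rfl | hqp
    · exact soMat.apply_self (hsub hM) q
    · rw [soMat.apply_swap (hsub hM), hoff q p hq hqp, neg_zero]
  · exact hoff p q hp hpk

/-- With `H = E₁₂ - E₂₁`, `M + ad(H)² M ∈ 𝔪 ∩ 𝔥` is the `𝔥`-component `M 1 2 • H` of `M`. -/
lemma apply_eq_zero_of_mem_fin_three {𝔪 : Submodule ℝ (Matrix (Fin (2 + 1)) (Fin (2 + 1)) ℝ)}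
    (hsub : 𝔪 ≤ soMat (2 + 1)) (hdisj : soStabilizer 2 ⊓ 𝔪 = ⊥)
    (hinv : ∀ H ∈ soStabilizer 2, ∀ X ∈ 𝔪, H * X - X * H ∈ 𝔪)
    {M : Matrix (Fin (2 + 1)) (Fin (2 + 1)) ℝ} (hM : M ∈ 𝔪) {p q : Fin (2 + 1)}
    (hp : p ≠ 0) (hq : q ≠ 0) : M p q = 0 := by
  have hH : skewSingle 1 2 ∈ soStabilizer 2 := skewSingle_mem (by decide) (by decide)
  have had2 := hinv _ hH _ (hinv _ hH M hM)
  have hzero := eq_zero_of_mem_of_col_eq_zero hsub hdisj (add_mem hM had2) fun i => by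
    fin_cases i <;> simp [skewSingle_mul_apply, mul_skewSingle_apply, soMat.apply_self (hsub hM)]
  have hentry := congrFun (congrFun hzero 1) 2
  simp only [Matrix.add_apply, Matrix.sub_apply, Matrix.zero_apply, skewSingle_mul_apply,
    mul_skewSingle_apply, Fin.isValue, Fin.reduceEq, ↓reduceIte, zero_sub, sub_zero,
    sub_neg_eq_add] at hentry
  have h12 : M 1 2 = 0 := by linarith [soMat.apply_swap (hsub hM) 1 2]
  fin_cases p <;> fin_cases q <;>
    simp_all [soMat.apply_self (hsub hM), soMat.apply_swap (hsub hM) 1 2]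

end Complement

section Uniqueness

variable {n : ℕ} {𝔪 : Submodule ℝ (Matrix (Fin (n + 1)) (Fin (n + 1)) ℝ)}

lemma skewOfCol_mem (hn : 2 ≤ n) (hn3 : n ≠ 3) (hsub : 𝔪 ≤ soMat (n + 1))
    (hdisj : soStabilizer n ⊓ 𝔪 = ⊥) (hsum : soStabilizer n ⊔ 𝔪 = soMat (n + 1))
    (hinv : ∀ H ∈ soStabilizer n, ∀ X ∈ 𝔪, H * X - X * H ∈ 𝔪) (v : Fin (n + 1) → ℝ) :
    skewOfCol n v ∈ 𝔪 := by
  suffices hbasis : ∀ k, skewOfCol n (Pi.single k 1) ∈ 𝔪 by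
    rw [LinearMap.pi_apply_eq_sum_univ]
    refine Submodule.sum_mem _ fun k _ => Submodule.smul_mem _ _ ?_
    convert hbasis k using 2
    ext j
    simp [Pi.single_apply, eq_comm]
  intro k
  rcases eq_or_ne k 0 with rfl | hk
  · rw [skewOfCol_single_zero]
    exact zero_mem 𝔪
  obtain ⟨M, hM, hcol⟩ := exists_mem_col_eq hsum (v := Pi.single k 1) (by simp [hk.symm])
  have hint : ∀ p q, p ≠ 0 → q ≠ 0 → M p q = 0 := by
    obtain rfl | h4 : n = 2 ∨ 4 ≤ n := by omega
    · exact fun p q => apply_eq_zero_of_mem_fin_three hsub hdisj hinv hM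
    · exact fun p q => apply_eq_zero_of_col_supported h4 hsub hdisj hinv hM (k := k)
        fun i hi => by simp [hcol, hi]
  have hMeq := eq_skewOfCol_of_mem_soMat (hsub hM) hint
  rw [funext hcol] at hMeq
  exact hMeq ▸ hM

lemma mem_iff_apply_eq_zero (hn : 2 ≤ n) (hn3 : n ≠ 3) (hsub : 𝔪 ≤ soMat (n + 1))
    (hdisj : soStabilizer n ⊓ 𝔪 = ⊥) (hsum : soStabilizer n ⊔ 𝔪 = soMat (n + 1))
    (hinv : ∀ H ∈ soStabilizer n, ∀ X ∈ 𝔪, H * X - X * H ∈ 𝔪)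
    {M : Matrix (Fin (n + 1)) (Fin (n + 1)) ℝ} :
    M ∈ 𝔪 ↔ M ∈ soMat (n + 1) ∧ ∀ p q, p ≠ 0 → q ≠ 0 → M p q = 0 := by
  have hstd := skewOfCol_mem hn hn3 hsub hdisj hsum hinv
  constructor
  · intro hM
    have h00 := soMat.apply_self (hsub hM) 0
    have hdiff := eq_zero_of_mem_of_col_eq_zero hsub hdisj (sub_mem hM (hstd fun i => M i 0))
      fun i => by rw [Matrix.sub_apply, skewOfCol_apply_zero (v := fun i => M i 0) h00, sub_self]
    rw [sub_eq_zero] at hdiff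
    refine ⟨hsub hM, fun p q hp hq => ?_⟩
    rw [hdiff, skewOfCol_apply, if_neg hq, if_neg hp, sub_zero]
  · rintro ⟨hso, hint⟩
    exact eq_skewOfCol_of_mem_soMat hso hint ▸ hstd _

end Uniqueness

/-- For `n ≥ 2`, `n ≠ 3`, the only `Ad(SO(n))`-invariant (equivalently,
`ad(so(n))`-invariant) complement of `so(n)` in `so(n+1)` is the orthogonal complement of
`so(n)` with respect to the Killing form (equivalently, the trace form) of `so(n+1)`;
i.e. the reductive decomposition of the homogeneous sphere `SO(n+1)/SO(n)` is unique.
Here `so(n) ⊂ so(n+1)` is realized as `𝔥 = {A ∈ so(n+1) : A e₀ = 0}`, the stabilizer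
subalgebra of the first basis vector. -/
theorem stmt11 (n : ℕ) (hn : 2 ≤ n) (hn3 : n ≠ 3)
    (𝔪 : Submodule ℝ (Matrix (Fin (n + 1)) (Fin (n + 1)) ℝ))
    (hsub : 𝔪 ≤ soMat (n + 1))
    (hdisj : (soMat (n + 1) ⊓ LinearMap.ker (evalFirst n)) ⊓ 𝔪 = ⊥)
    (hsum : (soMat (n + 1) ⊓ LinearMap.ker (evalFirst n)) ⊔ 𝔪 = soMat (n + 1))
    (hinv : ∀ H ∈ soMat (n + 1) ⊓ LinearMap.ker (evalFirst n),
      ∀ X ∈ 𝔪, H * X - X * H ∈ 𝔪) :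
    (𝔪 : Set (Matrix (Fin (n + 1)) (Fin (n + 1)) ℝ))
      = {A | A ∈ soMat (n + 1) ∧
          ∀ H ∈ soMat (n + 1) ⊓ LinearMap.ker (evalFirst n), (A * H).trace = 0} := by
  ext A
  rw [SetLike.mem_coe, mem_iff_apply_eq_zero hn hn3 hsub hdisj hsum hinv]
  exact and_congr_right fun hA => (trace_orthogonal_iff hA).symm
end

section
/- Consider the left-invariant metric ⟨x,y⟩ = B(Ax,y) on Spin(3), identified with the unit quaternions, where B(x,y) = −trace(xy) on so(3) ≅ Im(ℍ), and A is the symmetric endomorphism with Ai = 2i, Aj = sj, Ak = tk (s,t > 0). Then the right-invariant Killing field I : g ↦ ig satisfies (∇I)₁ = 0 (is a transvection at the identity) if and only if s + t = 2. -/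
/-!
For imaginary `x, y` the Koszul sum is an alternating bilinear form in `(x, y)` that vanishes
when `x` or `y` is `i`, so it is `x_j y_k - x_k y_j` times its value at `(j, k)`. Writing
`[u, v] = uv - vu`, we have `[i, j] = 2k`, `[k, j] = -2i`, `[k, i] = 2j`, so that value is
`2t - 2a + 2s` when `Ai = a i`; hence `(∇I)₁ = 0` exactly when `s + t = a`.
-/

open Quaternion

/-- The quaternion `i`. -/
def iq : Quaternion ℝ := ⟨0, 1, 0, 0⟩

theorem iq_re : iq.re = 0 := rfl
theorem iq_imI : iq.imI = 1 := rfl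
theorem iq_imJ : iq.imJ = 0 := rfl
theorem iq_imK : iq.imK = 0 := rfl

section DiagonalMetric

variable {a s t : ℝ} {A : Quaternion ℝ → Quaternion ℝ}
  {g : Quaternion ℝ → Quaternion ℝ → ℝ}

theorem metric_apply_eq
    (hA : ∀ x : Quaternion ℝ, A x = ⟨x.re, a * x.imI, s * x.imJ, t * x.imK⟩)
    (hg : ∀ x y : Quaternion ℝ, g x y = -((A x) * y).re) (u v : Quaternion ℝ) :
    g u v = -(u.re * v.re - a * u.imI * v.imI - s * u.imJ * v.imJ - t * u.imK * v.imK) := by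
  have hre : (A u).re = u.re := by rw [hA]
  have hI : (A u).imI = a * u.imI := by rw [hA]
  have hJ : (A u).imJ = s * u.imJ := by rw [hA]
  have hK : (A u).imK = t * u.imK := by rw [hA]
  rw [hg, Quaternion.re_mul, hre, hI, hJ, hK]

theorem koszul_sum_eq
    (hA : ∀ x : Quaternion ℝ, A x = ⟨x.re, a * x.imI, s * x.imJ, t * x.imK⟩)
    (hg : ∀ x y : Quaternion ℝ, g x y = -((A x) * y).re)
    {x y : Quaternion ℝ} (hx : x.re = 0) (hy : y.re = 0) :
    g (iq * x - x * iq) y + g (y * x - x * y) iq + g (y * iq - iq * y) x =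
      2 * (x.imJ * y.imK - x.imK * y.imJ) * (s + t - a) := by
  simp only [metric_apply_eq hA hg, Quaternion.re_mul, Quaternion.imI_mul, Quaternion.imJ_mul,
    Quaternion.imK_mul, Quaternion.re_sub, Quaternion.imI_sub, Quaternion.imJ_sub,
    Quaternion.imK_sub, iq_re, iq_imI, iq_imJ, iq_imK, hx, hy]
  ring

end DiagonalMetric

theorem stmt13_general (s t : ℝ)
    (A : Quaternion ℝ → Quaternion ℝ)
    (hA : ∀ x : Quaternion ℝ, A x = ⟨x.re, 2 * x.imI, s * x.imJ, t * x.imK⟩)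
    (g : Quaternion ℝ → Quaternion ℝ → ℝ)
    (hg : ∀ x y : Quaternion ℝ, g x y = -((A x) * y).re) :
    (∀ x y : Quaternion ℝ, x.re = 0 → y.re = 0 →
        g (iq * x - x * iq) y + g (y * x - x * y) iq + g (y * iq - iq * y) x = 0)
      ↔ s + t = 2 := by
  constructor
  · intro h
    have hjk := h ⟨0, 0, 1, 0⟩ ⟨0, 0, 0, 1⟩ rfl rfl
    rw [koszul_sum_eq (x := ⟨0, 0, 1, 0⟩) (y := ⟨0, 0, 0, 1⟩) hA hg rfl rfl] at hjk
    norm_num at hjk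
    linarith
  · intro h x y hx hy
    rw [koszul_sum_eq hA hg hx hy, h, sub_self, mul_zero]

/-- On `Spin(3)`, identified with the unit quaternions (so that
`so(3) ≅ Im ℍ` with Killing-field bracket `[x,y]₁ = yx - xy`), consider the left-invariant
metric `⟨x,y⟩ = B(Ax, y)` where `B(x,y) = -re(xy)` (proportional to `-trace(xy)` on
`so(3)`, normalized so that `B(i,i) = 2` for `Ai = 2i`) and `A` is the symmetric
endomorphism with `Ai = 2i`, `Aj = sj`, `Ak = tk`, `s, t > 0`.  Then the right-invariant
Killing field `I : g ↦ ig` is a transvection at the identity, `(∇I)₁ = 0` — equivalently,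
by the Koszul formula for Killing fields, `⟨[X,I],Y⟩ + ⟨[X,Y],I⟩ + ⟨[I,Y],X⟩ = 0` at `1`
for all Killing fields `X, Y` with imaginary values `x, y` — if and only if `s + t = 2`. -/
theorem stmt13 (s t : ℝ) (hs : 0 < s) (ht : 0 < t)
    (A : Quaternion ℝ → Quaternion ℝ)
    (hA : ∀ x : Quaternion ℝ, A x = ⟨x.re, 2 * x.imI, s * x.imJ, t * x.imK⟩)
    (g : Quaternion ℝ → Quaternion ℝ → ℝ)
    (hg : ∀ x y : Quaternion ℝ, g x y = -((A x) * y).re) :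
    (∀ x y : Quaternion ℝ, x.re = 0 → y.re = 0 →
        g (iq * x - x * iq) y + g (y * x - x * y) iq + g (y * iq - iq * y) x = 0)
      ↔ s + t = 2 :=
  stmt13_general s t A hA g hg
end

section
/- Let Q_λ = (B, λB) be the Ad-invariant symmetric bilinear form on so(4) = so(3) ⊕ so(3), where −B is the Killing form of so(3) and λ > 0, λ ≠ 1. If ρ is a Lie algebra automorphism of so(4) preserving diag(so(3)) and mapping 𝔪^λ = {(u, −(1/λ)u)} onto 𝔪^{λ'} = {(u, −(1/λ')u)}, with 0 < λ < λ' ≤ 1, then a contradiction arises; hence λ = λ'. -/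
/-!
The image under `ρ` of either factor of `L × L` is an ideal isomorphic to the simple Lie
algebra `L`, and such an ideal lies in one factor because `L` has trivial centre; so each of
`ρ (u, 0)` and `ρ (0, u)` has a vanishing component. Writing out that `ρ` maps `(u, u)` into
the diagonal and `(u, -(1/λ) u)` into `𝔪^{λ'}` then leaves, in each of the four cases, a
nonzero multiple of `ρ (u, 0)` equal to zero: the multiples are `λλ' + λ'`, `λλ' - 1`,
`λ - λ'` and `λ + 1`. Hence `ρ` kills `L × 0`, contradicting injectivity.
-/

open LieAlgebra LieHom

section

variable {R L M M' : Type*} [CommRing R] [LieRing L] [LieAlgebra R L]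
  [LieRing M] [LieAlgebra R M] [LieRing M'] [LieAlgebra R M']

theorem LieHom.eq_zero_or_injective [IsSimple R L] (f : L →ₗ⁅R⁆ M) :
    f = 0 ∨ Function.Injective f := by
  rcases IsSimple.eq_bot_or_eq_top f.ker with h | h
  · exact Or.inr ((ker_eq_bot f).mp h)
  · exact Or.inl (ext fun u => mem_ker.mp (h ▸ LieSubmodule.mem_top u))

theorem LieHom.IsIdealMorphism.comp_of_surjective {f : M →ₗ⁅R⁆ M'} {g : L →ₗ⁅R⁆ M}
    (hg : g.IsIdealMorphism) (hf : Function.Surjective f) : (f.comp g).IsIdealMorphism := by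
  rw [isIdealMorphism_iff] at hg ⊢
  intro x u
  obtain ⟨y, rfl⟩ := hf x
  obtain ⟨z, hz⟩ := hg y u
  exact ⟨z, by rw [coe_comp, Function.comp_apply, ← map_lie, hz, Function.comp_apply]⟩

theorem LieHom.isIdealMorphism_inl : (inl R M M').IsIdealMorphism :=
  (isIdealMorphism_iff _).mpr fun x u => ⟨⁅x.1, u⁆, by simp⟩

theorem LieHom.isIdealMorphism_inr : (inr R M M').IsIdealMorphism :=
  (isIdealMorphism_iff _).mpr fun x u => ⟨⁅x.2, u⁆, by simp⟩

theorem LieHom.IsIdealMorphism.fst_eq_zero_or_snd_eq_zero [IsSimple R L]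
    [LieModule.IsFaithful R M M] {f : L →ₗ⁅R⁆ M × M'} (hf : f.IsIdealMorphism) :
    (∀ u, (f u).1 = 0) ∨ (∀ u, (f u).2 = 0) := by
  rcases ((snd R M M').comp f).eq_zero_or_injective with h | hinj
  · exact Or.inr fun u => congr($h u)
  refine Or.inl fun u => ?_
  suffices (f u).1 ∈ center R M by rwa [center_eq_bot, LieSubmodule.mem_bot] at this
  refine (LieModule.mem_maxTrivSubmodule R M M _).mpr fun a => ?_
  obtain ⟨z, hz⟩ := (isIdealMorphism_iff f).mp hf (a, 0) u
  have hz0 : z = 0 := hinj <| by simpa using (congr_arg Prod.snd hz).symm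
  simpa [hz0] using congr_arg Prod.fst hz

end

theorem eq_zero_of_diag_and_m_relations {V : Type*} [AddCommGroup V] [Module ℝ V]
    {lam lam' : ℝ} (h0 : 0 < lam) (hlt : lam < lam') (h1 : lam' ≤ 1) {p q : V × V}
    (hdiag : ∃ y, p + q = (y, y)) (hm : ∃ v, p - (1 / lam) • q = (v, -(1 / lam') • v))
    (hp : p.1 = 0 ∨ p.2 = 0) (hq : q.1 = 0 ∨ q.2 = 0) : p = 0 := by
  obtain ⟨a, b⟩ := p
  obtain ⟨c, d⟩ := q
  obtain ⟨y, hy₁, hy₂⟩ : ∃ y, a + c = y ∧ b + d = y := by simpa using hdiag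
  obtain ⟨v, hv₁, hv₂⟩ : ∃ v, a - (1 / lam) • c = v ∧ b - (1 / lam) • d = -(1 / lam') • v := by
    simpa using hm
  have h0' : 0 < lam' := h0.trans hlt
  have hsum : a + c = b + d := hy₁.trans hy₂.symm
  have hm' : (lam * lam') • b - lam' • d = c - lam • a := by
    have := h0.ne'
    have := h0'.ne'
    linear_combination (norm := match_scalars <;> field_simp <;> ring)
      (lam * lam') • hv₂ + lam • hv₁
  simp only at hp hq
  rcases hp with rfl | rfl <;> rcases hq with rfl | rfl
  · have : (lam * lam' + lam') • b = 0 := by linear_combination (norm := module) hm' - lam' • hsum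
    simp [(smul_eq_zero_iff_right (by positivity)).mp this]
  · have : (lam * lam' - 1) • b = 0 := by linear_combination (norm := module) hm' + hsum
    simp [(smul_eq_zero_iff_right (by nlinarith)).mp this]
  · have : (lam - lam') • a = 0 := by linear_combination (norm := module) hm' - lam' • hsum
    simp [(smul_eq_zero_iff_right (by linarith)).mp this]
  · have : (lam + 1) • a = 0 := by linear_combination (norm := module) hm' + hsum
    simp [(smul_eq_zero_iff_right (by positivity)).mp this]

theorem stmt17_general {L : Type*} [LieRing L] [LieAlgebra ℝ L]
    [LieAlgebra.IsSimple ℝ L]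
    (lam lam' : ℝ) (h0 : 0 < lam) (hlt : lam < lam') (h1 : lam' ≤ 1)
    (ρ : (L × L) ≃ₗ[ℝ] (L × L))
    (hbracket : ∀ x y : L × L,
      ρ (⁅x.1, y.1⁆, ⁅x.2, y.2⁆) = (⁅(ρ x).1, (ρ y).1⁆, ⁅(ρ x).2, (ρ y).2⁆))
    (hdiag : ∀ x : L, ∃ y : L, ρ (x, x) = (y, y))
    (hm : ∀ u : L, ∃ v : L, ρ (u, -(1 / lam) • u) = (v, -(1 / lam') • v)) :
    False := by
  let f : L × L →ₗ⁅ℝ⁆ L × L := { ρ.toLinearMap with map_lie' := hbracket _ _ }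
  have hf : Function.Surjective f := ρ.surjective
  have hinl : (∀ s, (ρ (s, 0)).1 = 0) ∨ (∀ s, (ρ (s, 0)).2 = 0) :=
    (isIdealMorphism_inl.comp_of_surjective hf).fst_eq_zero_or_snd_eq_zero
  have hinr : (∀ t, (ρ (0, t)).1 = 0) ∨ (∀ t, (ρ (0, t)).2 = 0) :=
    (isIdealMorphism_inr.comp_of_surjective hf).fst_eq_zero_or_snd_eq_zero
  have := IsSimple.nontrivial ℝ L
  obtain ⟨u, hu⟩ := exists_ne (0 : L)
  have hdiag_u : ∃ y, ρ (u, 0) + ρ (0, u) = (y, y) := by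
    obtain ⟨y, hy⟩ := hdiag u
    exact ⟨y, by rw [← hy, ← map_add, Prod.mk_add_mk, add_zero, zero_add]⟩
  have hm_u : ∃ v, ρ (u, 0) - (1 / lam) • ρ (0, u) = (v, -(1 / lam') • v) := by
    obtain ⟨v, hv⟩ := hm u
    exact ⟨v, by rw [← hv, ← map_smul, ← map_sub]; simp [sub_eq_add_neg]⟩
  have hρu : ρ (u, 0) = 0 := eq_zero_of_diag_and_m_relations h0 hlt h1 hdiag_u hm_u
    (hinl.imp (· u) (· u)) (hinr.imp (· u) (· u))
  exact hu congr($(ρ.map_eq_zero_iff.mp hρu).1)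

/-- Let `Q_λ = (B, λB)` be the invariant form on `so(4) = so(3) ⊕ so(3)`
(`-B` the Killing form of `so(3)`), `λ > 0`.  If `ρ` is a Lie algebra automorphism of
`so(4)` (a linear automorphism of `L × L` preserving the componentwise bracket up to the
swap-or-preserve behaviour of automorphisms — encoded by the bracket-compatibility
hypothesis) which preserves `diag(so(3))` and maps `𝔪^λ = {(u, -(1/λ)u)}` onto
`𝔪^{λ'} = {(u, -(1/λ')u)}`, and `0 < λ < λ' ≤ 1`, then a contradiction arises; hence
`λ = λ'`.  Here `L` is an abstract copy of `so(3)`: a finite-dimensional simple real Lie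
algebra. -/
theorem stmt17 {L : Type*} [LieRing L] [LieAlgebra ℝ L] [FiniteDimensional ℝ L]
    [LieAlgebra.IsSimple ℝ L]
    (lam lam' : ℝ) (h0 : 0 < lam) (hlt : lam < lam') (h1 : lam' ≤ 1)
    (ρ : (L × L) ≃ₗ[ℝ] (L × L))
    (hbracket : ∀ x y : L × L,
      ρ (⁅x.1, y.1⁆, ⁅x.2, y.2⁆) = (⁅(ρ x).1, (ρ y).1⁆, ⁅(ρ x).2, (ρ y).2⁆))
    (hdiag : ∀ x : L, ∃ y : L, ρ (x, x) = (y, y))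
    (hm : ∀ u : L, ∃ v : L, ρ (u, -(1 / lam) • u) = (v, -(1 / lam') • v)) :
    False :=
  stmt17_general lam lam' h0 hlt h1 ρ hbracket hdiag hm
end
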